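/- arXiv:1505.02402 — 2 statements merged into one kernel-verified Lean document; each statement's English description precedes it below -/
import Mathlib

section
/- Upper quadratic bound on the Lyapunov–Krasovskii functional (Lemma 1): for every x ∈ ℝⁿ and every piecewise continuous φ : [-h,0) → ℝʳ, v(x, φ) ≤ M (‖x‖² + ‖φ‖²), where M = max{ 2 λ_max(V), λ_max(W'') + 2 h λ_max(V) · max_{θ ∈ [-h,0]} ‖Q(θ)‖² } and ‖φ‖² = ∫_{-h}^0 ‖φ(θ)‖² dθ. -/
open scoped Matrix.Norms.L2Operator
open Matrix MeasureTheory

/-- Minimal eigenvalue of a (symmetric) real matrix, as the infimum of its real spectrum. -/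
noncomputable def lamMin {n : ℕ} (M : Matrix (Fin n) (Fin n) ℝ) : ℝ := sInf (spectrum ℝ M)

/-- Maximal eigenvalue of a (symmetric) real matrix, as the supremum of its real spectrum. -/
noncomputable def lamMax {n : ℕ} (M : Matrix (Fin n) (Fin n) ℝ) : ℝ := sSup (spectrum ℝ M)

/-- `f` is piecewise continuous on `s ⊆ ℝ`: continuous within `s` away from a finite
exceptional set, and bounded on `s`. -/
def PiecewiseContinuousOn {E : Type*} [NormedAddCommGroup E] (f : ℝ → E) (s : Set ℝ) : Prop :=
  ∃ t : Finset ℝ, (∀ x ∈ s \ (t : Set ℝ), ContinuousWithinAt f s x) ∧ ∃ C, ∀ x ∈ s, ‖f x‖ ≤ C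

/-! The two terms of `v` are bounded separately. The quadratic form in `V` is at most
`λ_max(V) ‖x + u‖² ≤ 2 λ_max(V) (‖x‖² + ‖u‖²)` with `u = ∫ Q φ`; the operator norm gives
`‖u‖ ≤ sup ‖Q‖ · ∫ ‖φ‖`, and Cauchy–Schwarz on `[-h, 0]` turns this into
`‖u‖² ≤ h · sup ‖Q‖² · ∫ ‖φ‖²`. In the second term `e^{σθ} ≤ 1`, because `σ ≥ 0` and `θ ≤ 0`,
which leaves `λ_max(W'') ∫ ‖φ‖²`.

The supremum of `‖Q‖²` is a genuine bound, not the junk value of `sSup` on an unbounded set,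
because `Q` is bounded on `[-h, 0]`: `e^{sA}` is bounded for `s ∈ [-h, 0]`, and so is `B_int`. -/

open Set
open scoped ENNReal

section PiecewiseContinuous

variable {E F : Type*} [NormedAddCommGroup E] [NormedAddCommGroup F]

lemma PiecewiseContinuousOn.comp [ProperSpace E] {f : ℝ → E} {s : Set ℝ}
    (hf : PiecewiseContinuousOn f s) {g : E → F} (hg : Continuous g) :
    PiecewiseContinuousOn (g ∘ f) s := by
  obtain ⟨t, hcont, C, hC⟩ := hf
  obtain ⟨K, hK⟩ := (isCompact_closedBall (0 : E) C).exists_bound_of_continuousOn hg.continuousOn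
  exact ⟨t, fun x hx => hg.continuousAt.comp_continuousWithinAt (hcont x hx),
    K, fun x hx => hK _ (mem_closedBall_zero_iff.mpr (hC x hx))⟩

lemma PiecewiseContinuousOn.exists_norm_le {f : ℝ → E} {s : Set ℝ}
    (hf : PiecewiseContinuousOn f s) : ∃ C, ∀ x ∈ s, ‖f x‖ ≤ C := by
  obtain ⟨-, -, hC⟩ := hf
  exact hC

lemma PiecewiseContinuousOn.aestronglyMeasurable {μ : Measure ℝ} [NullSingletonClass μ]
    {f : ℝ → E} {s : Set ℝ} (hf : PiecewiseContinuousOn f s) (hs : MeasurableSet s) :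
    AEStronglyMeasurable f (μ.restrict s) := by
  obtain ⟨t, hcont, -⟩ := hf
  rw [← Measure.restrict_congr_set (sdiff_null_ae_eq_self (t.finite_toSet.measure_zero μ))]
  exact ContinuousOn.aestronglyMeasurable (fun x hx => (hcont x hx).mono sdiff_subset)
    (hs.diff t.finite_toSet.measurableSet)

lemma PiecewiseContinuousOn.integrableOn {μ : Measure ℝ} [NullSingletonClass μ] {f : ℝ → E}
    {s : Set ℝ} (hf : PiecewiseContinuousOn f s) (hs : MeasurableSet s) (hμs : μ s < ∞) :
    IntegrableOn f s μ := by
  obtain ⟨C, hC⟩ := hf.exists_norm_le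
  exact .of_bound hμs (hf.aestronglyMeasurable hs) C ((ae_restrict_iff' hs).mpr (ae_of_all _ hC))

lemma PiecewiseContinuousOn.integrableOn_Ioc {f : ℝ → E} {a b : ℝ}
    (hf : PiecewiseContinuousOn f (Ico a b)) : IntegrableOn f (Ioc a b) :=
  (hf.integrableOn measurableSet_Ico measure_Ico_lt_top).congr_set_ae Ico_ae_eq_Ioc.symm

end PiecewiseContinuous

lemma sq_integral_le_measureReal_univ_mul {α : Type*} [MeasurableSpace α] {μ : Measure α}
    [IsFiniteMeasure μ] {g : α → ℝ} (hg : Integrable g μ) (hg2 : Integrable (fun x => g x ^ 2) μ) :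
    (∫ x, g x ∂μ) ^ 2 ≤ μ.real univ * ∫ x, g x ^ 2 ∂μ := by
  rcases eq_zero_or_neZero μ with rfl | _
  · simp
  have hc : 0 < μ.real univ := measureReal_univ_pos
  have jensen := (Even.convexOn_pow (𝕜 := ℝ) even_two).map_average_le
    (continuous_pow 2).continuousOn isClosed_univ (ae_of_all _ fun _ => mem_univ _) hg hg2
  rw [average_eq, average_eq, smul_eq_mul, smul_eq_mul, mul_pow] at jensen
  field_simp at jensen
  linarith

section Spectrum

open scoped MatrixOrder

variable {k : ℕ} {P : Matrix (Fin k) (Fin k) ℝ}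

lemma lamMin_nonneg (hP : P.PosSemidef) : 0 ≤ lamMin P :=
  Real.sInf_nonneg fun _ hμ => spectrum_nonneg_of_nonneg (nonneg_iff_posSemidef.mpr hP) hμ

lemma lamMax_nonneg (hP : P.PosSemidef) : 0 ≤ lamMax P :=
  Real.sSup_nonneg fun _ hμ => spectrum_nonneg_of_nonneg (nonneg_iff_posSemidef.mpr hP) hμ

lemma dotProduct_mulVec_le_lamMax (hP : P.IsHermitian) (x : Fin k → ℝ) :
    x ⬝ᵥ P *ᵥ x ≤ lamMax P * (x ⬝ᵥ x) := by
  have hle : P ≤ algebraMap ℝ _ (lamMax P) :=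
    le_algebraMap_of_spectrum_le (fun _ hμ => le_csSup (spectrum.isBounded P).bddAbove hμ) hP
  simpa [Algebra.algebraMap_eq_smul_one, sub_mulVec, smul_mulVec, dotProduct_sub] using
    (le_iff.mp hle).dotProduct_mulVec_nonneg x

end Spectrum

lemma dotProduct_add_self_le {ι : Type*} [Fintype ι] (x y : ι → ℝ) :
    (x + y) ⬝ᵥ (x + y) ≤ 2 * (x ⬝ᵥ x) + 2 * (y ⬝ᵥ y) := by
  have := dotProduct_star_self_nonneg (x - y)
  simp only [star_trivial, sub_dotProduct, dotProduct_sub, add_dotProduct, dotProduct_add,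
    dotProduct_comm y x] at this ⊢
  linarith

/-- The paper's `Q`: hypothesis `hQ` of the theorem says `Q θ = delayKernel A B hd hint Bint θ`
on `[-h, 0]`. -/
noncomputable def delayKernel {n r N : ℕ} (A : Matrix (Fin n) (Fin n) ℝ)
    (B : Fin N → Matrix (Fin n) (Fin r) ℝ) (hd : Fin N → ℝ) (hint : ℝ)
    (Bint : ℝ → Matrix (Fin n) (Fin r) ℝ) (θ : ℝ) : Matrix (Fin n) (Fin r) ℝ :=
  (∑ i : Fin N, if -hd i ≤ θ then NormedSpace.exp ((-hd i - θ) • A) * B i else 0)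
    + ∫ τ in Set.Ioc (-hint) θ, NormedSpace.exp ((τ - θ) • A) * Bint τ

lemma exists_norm_exp_smul_le {n : ℕ} (A : Matrix (Fin n) (Fin n) ℝ) (h : ℝ) :
    ∃ E, ∀ s ∈ Icc (-h) 0, ‖NormedSpace.exp (s • A)‖ ≤ E :=
  isCompact_Icc.exists_bound_of_continuousOn <| Continuous.continuousOn <|
    continuous_iff_continuousAt.mpr fun s => (hasDerivAt_exp_smul_const A s).continuousAt

lemma exists_norm_delayKernel_le {n r N : ℕ} (A : Matrix (Fin n) (Fin n) ℝ)
    (B : Fin N → Matrix (Fin n) (Fin r) ℝ) {hd : Fin N → ℝ} {hint h : ℝ}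
    (Bint : ℝ → Matrix (Fin n) (Fin r) ℝ) (hhd : ∀ i, hd i ≤ h) (hhint : hint ≤ h)
    (hBint : ∃ C, ∀ τ ∈ Icc (-hint) 0, ‖Bint τ‖ ≤ C) :
    ∃ K, ∀ θ ∈ Icc (-h) 0, ‖delayKernel A B hd hint Bint θ‖ ≤ K := by
  obtain ⟨E, hE⟩ := exists_norm_exp_smul_le A h
  obtain ⟨C, hC⟩ := hBint
  refine ⟨∑ i, E * ‖B i‖ + E * max C 0 * h, fun θ ⟨hθh, hθ0⟩ => ?_⟩
  have hE0 : 0 ≤ E := (norm_nonneg _).trans (hE 0 ⟨by linarith, le_rfl⟩)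
  refine (norm_add_le _ _).trans (add_le_add ?_ ?_)
  · refine (norm_sum_le _ _).trans (Finset.sum_le_sum fun i _ => ?_)
    split_ifs with hi
    · exact (l2_opNorm_mul _ _).trans (mul_le_mul_of_nonneg_right
        (hE _ ⟨by linarith [hhd i], by linarith⟩) (norm_nonneg _))
    · rw [norm_zero]; positivity
  · calc _ ≤ E * max C 0 * volume.real (Ioc (-hint) θ) := by
          refine norm_setIntegral_le_of_norm_le_const measure_Ioc_lt_top fun τ ⟨hτl, hτr⟩ => ?_
          exact (l2_opNorm_mul _ _).trans (mul_le_mul (hE _ ⟨by linarith, by linarith⟩)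
            ((hC τ ⟨hτl.le, hτr.trans hθ0⟩).trans (le_max_left _ _)) (norm_nonneg _) hE0)
      _ ≤ E * max C 0 * h := by
          rw [Real.volume_real_Ioc]
          exact mul_le_mul_of_nonneg_left (max_le (by linarith) (by linarith)) (by positivity)

lemma norm_toLp_sq_eq_dotProduct {ι : Type*} [Fintype ι] (v : ι → ℝ) :
    ‖WithLp.toLp 2 v‖ ^ 2 = v ⬝ᵥ v := by
  rw [← real_inner_self_eq_norm_sq, EuclideanSpace.inner_toLp_toLp, star_trivial]

lemma dotProduct_self_integral_mulVec_le {m p : Type*} [Fintype m] [Fintype p] [DecidableEq p]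
    {Q : ℝ → Matrix m p ℝ} {φ : ℝ → p → ℝ} {a b c : ℝ} (hab : a ≤ b)
    (hQ : ∀ θ ∈ Ioc a b, ‖Q θ‖ ≤ c) (hφ : PiecewiseContinuousOn φ (Ico a b)) :
    (∫ θ in a..b, Q θ *ᵥ φ θ) ⬝ᵥ (∫ θ in a..b, Q θ *ᵥ φ θ)
      ≤ c ^ 2 * (b - a) * ∫ θ in a..b, φ θ ⬝ᵥ φ θ := by
  simp only [intervalIntegral.integral_of_le hab]
  set g : ℝ → ℝ := fun θ => ‖WithLp.toLp 2 (φ θ)‖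
  have hg : IntegrableOn g (Ioc a b) :=
    (hφ.comp (continuous_norm.comp (PiLp.continuous_toLp 2 _))).integrableOn_Ioc
  have hg2 : IntegrableOn (fun θ => g θ ^ 2) (Ioc a b) :=
    (hφ.comp ((continuous_norm.comp (PiLp.continuous_toLp 2 _)).pow 2)).integrableOn_Ioc
  have hnorm : ‖WithLp.toLp 2 (∫ θ in Ioc a b, Q θ *ᵥ φ θ)‖ ≤ c * ∫ θ in Ioc a b, g θ := by
    calc _ = ‖∫ θ in Ioc a b, WithLp.toLp 2 (Q θ *ᵥ φ θ)‖ :=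
          congrArg norm ((EuclideanSpace.equiv m ℝ).symm.integral_comp_comm _).symm
      _ ≤ ∫ θ in Ioc a b, ‖WithLp.toLp 2 (Q θ *ᵥ φ θ)‖ := norm_integral_le_integral_norm _
      _ ≤ ∫ θ in Ioc a b, c * g θ := by
          refine integral_mono_of_nonneg (ae_of_all _ fun θ => norm_nonneg _) (hg.const_mul c)
            ((ae_restrict_iff' measurableSet_Ioc).mpr (ae_of_all _ fun θ hθ => ?_))
          exact ((Q θ).l2_opNorm_mulVec _).trans
            (mul_le_mul_of_nonneg_right (hQ θ hθ) (norm_nonneg _))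
      _ = _ := integral_const_mul _ _
  have hCS := sq_integral_le_measureReal_univ_mul hg hg2
  rw [measureReal_restrict_apply_univ, Real.volume_real_Ioc_of_le hab] at hCS
  calc _ = ‖WithLp.toLp 2 (∫ θ in Ioc a b, Q θ *ᵥ φ θ)‖ ^ 2 :=
        (norm_toLp_sq_eq_dotProduct _).symm
    _ ≤ (c * ∫ θ in Ioc a b, g θ) ^ 2 := pow_le_pow_left₀ (norm_nonneg _) hnorm 2
    _ ≤ c ^ 2 * ((b - a) * ∫ θ in Ioc a b, g θ ^ 2) := by
        rw [mul_pow]; exact mul_le_mul_of_nonneg_left hCS (sq_nonneg c)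
    _ = _ := by simp only [g, norm_toLp_sq_eq_dotProduct, mul_assoc]

lemma integral_exp_mul_dotProduct_mulVec_le {k : ℕ} {W : Matrix (Fin k) (Fin k) ℝ}
    (hW : W.PosSemidef) {σ a : ℝ} (hσ : 0 ≤ σ) (ha : a ≤ 0) {φ : ℝ → Fin k → ℝ}
    (hφ : PiecewiseContinuousOn φ (Ico a 0)) :
    ∫ θ in a..0, Real.exp (σ * θ) * (φ θ ⬝ᵥ W *ᵥ φ θ) ≤ lamMax W * ∫ θ in a..0, φ θ ⬝ᵥ φ θ := by
  rw [intervalIntegral.integral_of_le ha, intervalIntegral.integral_of_le ha,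
    ← integral_const_mul]
  have hq : ∀ θ, 0 ≤ φ θ ⬝ᵥ W *ᵥ φ θ := fun θ => by
    simpa using hW.dotProduct_mulVec_nonneg (φ θ)
  refine integral_mono_of_nonneg (ae_of_all _ fun θ => mul_nonneg (Real.exp_pos _).le (hq θ))
    ((hφ.comp (continuous_id.dotProduct continuous_id)).integrableOn_Ioc.const_mul _) ?_
  refine (ae_restrict_iff' measurableSet_Ioc).mpr (ae_of_all _ fun θ ⟨_, hθ⟩ => ?_)
  have hexp : Real.exp (σ * θ) ≤ 1 :=
    Real.exp_le_one_iff.mpr (mul_nonpos_of_nonneg_of_nonpos hσ hθ)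
  calc _ ≤ φ θ ⬝ᵥ W *ᵥ φ θ := mul_le_of_le_one_left (hq θ) hexp
    _ ≤ _ := dotProduct_mulVec_le_lamMax hW.1 (φ θ)

theorem lyapunov_functional_upper_bound_general
    {n r N : ℕ}
    (A : Matrix (Fin n) (Fin n) ℝ)
    (B : Fin N → Matrix (Fin n) (Fin r) ℝ)
    (hd : Fin N → ℝ)
    (hint : ℝ) (hint_nonneg : 0 ≤ hint)
    (Bint : ℝ → Matrix (Fin n) (Fin r) ℝ)
    (hBint : PiecewiseContinuousOn Bint (Set.Icc (-hint) 0))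
    (h : ℝ) (hh1 : ∀ i, hd i ≤ h) (hh2 : hint ≤ h)
    (Q : ℝ → Matrix (Fin n) (Fin r) ℝ)
    (hQ : ∀ θ ∈ Set.Icc (-h) 0, Q θ =
      (∑ i : Fin N, if -hd i ≤ θ then NormedSpace.exp ((-hd i - θ) • A) * B i else 0)
      + ∫ τ in Set.Ioc (-hint) θ, NormedSpace.exp ((τ - θ) • A) * Bint τ)
    (W1 : Matrix (Fin n) (Fin n) ℝ) (hW1 : W1.PosDef)
    (W2 : Matrix (Fin r) (Fin r) ℝ) (hW2 : W2.PosDef)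
    (V : Matrix (Fin n) (Fin n) ℝ) (hV : V.PosDef)
    (σ : ℝ) (hσ : σ = lamMin W1 / lamMax V)
    (M : ℝ)
    (hM : M = max (2 * lamMax V)
      (lamMax W2 + 2 * h * lamMax V * sSup ((fun θ => ‖Q θ‖ ^ 2) '' Set.Icc (-h) 0))) :
    ∀ (x : Fin n → ℝ) (φ : ℝ → Fin r → ℝ),
      PiecewiseContinuousOn φ (Set.Ico (-h) 0) →
      (x + ∫ θ in (-h)..0, (Q θ).mulVec (φ θ)) ⬝ᵥ
          V.mulVec (x + ∫ θ in (-h)..0, (Q θ).mulVec (φ θ))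
        + ∫ θ in (-h)..0, Real.exp (σ * θ) * (φ θ ⬝ᵥ W2.mulVec (φ θ))
      ≤ M * (x ⬝ᵥ x + ∫ θ in (-h)..0, φ θ ⬝ᵥ φ θ) := by
  intro x φ hφ
  have h0 : 0 ≤ h := hint_nonneg.trans hh2
  have hV0 := lamMax_nonneg hV.posSemidef
  have hσ0 : 0 ≤ σ := hσ ▸ div_nonneg (lamMin_nonneg hW1.posSemidef) hV0
  set T := sSup ((fun θ => ‖Q θ‖ ^ 2) '' Icc (-h) 0)
  obtain ⟨K, hK⟩ := exists_norm_delayKernel_le A B Bint hh1 hh2 hBint.exists_norm_le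
  have hbdd : BddAbove ((fun θ => ‖Q θ‖ ^ 2) '' Icc (-h) 0) := by
    refine ⟨K ^ 2, ?_⟩
    rintro _ ⟨θ, hθ, rfl⟩
    exact pow_le_pow_left₀ (norm_nonneg _) (hQ θ hθ ▸ hK θ hθ) 2
  have hT0 : 0 ≤ T := Real.sSup_nonneg (by rintro _ ⟨θ, -, rfl⟩; positivity)
  have hQT : ∀ θ ∈ Ioc (-h) 0, ‖Q θ‖ ≤ √T := fun θ hθ =>
    Real.le_sqrt_of_sq_le (le_csSup hbdd ⟨θ, Ioc_subset_Icc_self hθ, rfl⟩)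
  set u := ∫ θ in (-h)..0, Q θ *ᵥ φ θ
  set Φ := ∫ θ in (-h)..0, φ θ ⬝ᵥ φ θ
  have hu : u ⬝ᵥ u ≤ T * h * Φ := by
    simpa [Real.sq_sqrt hT0] using dotProduct_self_integral_mulVec_le (by linarith) hQT hφ
  have hW := integral_exp_mul_dotProduct_mulVec_le hW2.posSemidef hσ0 (by linarith) hφ
  have hΦ : 0 ≤ Φ := intervalIntegral.integral_nonneg (by linarith) fun θ _ => by
    simpa using dotProduct_star_self_nonneg (φ θ)
  have hx : 0 ≤ x ⬝ᵥ x := by simpa using dotProduct_star_self_nonneg x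
  have hM1 : 2 * lamMax V ≤ M := hM ▸ le_max_left _ _
  have hM2 : lamMax W2 + 2 * h * lamMax V * T ≤ M := hM ▸ le_max_right _ _
  calc _ ≤ lamMax V * (2 * (x ⬝ᵥ x) + 2 * (u ⬝ᵥ u)) + lamMax W2 * Φ :=
        add_le_add ((dotProduct_mulVec_le_lamMax hV.1 _).trans
          (mul_le_mul_of_nonneg_left (dotProduct_add_self_le x u) hV0)) hW
    _ ≤ 2 * lamMax V * (x ⬝ᵥ x) + (lamMax W2 + 2 * h * lamMax V * T) * Φ := by nlinarith
    _ ≤ M * (x ⬝ᵥ x + Φ) := by nlinarith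

/-- **Lemma 1**: upper quadratic bound on the Lyapunov–Krasovskii functional
`v(x,φ) = ‖x + ∫ Q φ‖_V² + ∫ e^{σθ} φᵀ W'' φ`. -/
theorem lyapunov_functional_upper_bound
    {n r N : ℕ}
    (A : Matrix (Fin n) (Fin n) ℝ)
    (B : Fin N → Matrix (Fin n) (Fin r) ℝ)
    (hd : Fin N → ℝ) (hd_nonneg : ∀ i, 0 ≤ hd i)
    (hint : ℝ) (hint_nonneg : 0 ≤ hint)
    (Bint : ℝ → Matrix (Fin n) (Fin r) ℝ)
    (hBint : PiecewiseContinuousOn Bint (Set.Icc (-hint) 0))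
    (h : ℝ) (hh1 : ∀ i, hd i ≤ h) (hh2 : hint ≤ h)
    (Q : ℝ → Matrix (Fin n) (Fin r) ℝ)
    (hQ : ∀ θ ∈ Set.Icc (-h) 0, Q θ =
      (∑ i : Fin N, if -hd i ≤ θ then NormedSpace.exp ((-hd i - θ) • A) * B i else 0)
      + ∫ τ in Set.Ioc (-hint) θ, NormedSpace.exp ((τ - θ) • A) * Bint τ)
    (F : Matrix (Fin r) (Fin n) ℝ)
    (W1 : Matrix (Fin n) (Fin n) ℝ) (hW1 : W1.PosDef)
    (W2 : Matrix (Fin r) (Fin r) ℝ) (hW2 : W2.PosDef)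
    (V : Matrix (Fin n) (Fin n) ℝ) (hV : V.PosDef)
    (hLyap : (A + Q 0 * F)ᵀ * V + V * (A + Q 0 * F) = -(W1 + (2 : ℝ) • (Fᵀ * W2 * F)))
    (σ : ℝ) (hσ : σ = lamMin W1 / lamMax V)
    (M : ℝ)
    (hM : M = max (2 * lamMax V)
      (lamMax W2 + 2 * h * lamMax V * sSup ((fun θ => ‖Q θ‖ ^ 2) '' Set.Icc (-h) 0))) :
    ∀ (x : Fin n → ℝ) (φ : ℝ → Fin r → ℝ),
      PiecewiseContinuousOn φ (Set.Ico (-h) 0) →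
      (x + ∫ θ in (-h)..0, (Q θ).mulVec (φ θ)) ⬝ᵥ
          V.mulVec (x + ∫ θ in (-h)..0, (Q θ).mulVec (φ θ))
        + ∫ θ in (-h)..0, Real.exp (σ * θ) * (φ θ ⬝ᵥ W2.mulVec (φ θ))
      ≤ M * (x ⬝ᵥ x + ∫ θ in (-h)..0, φ θ ⬝ᵥ φ θ) :=
  lyapunov_functional_upper_bound_general A B hd hint hint_nonneg Bint hBint h hh1 hh2 Q hQ W1 hW1
    W2 hW2 V hV σ hσ M hM
end

section
/- Quadratic minimization inequality used in the proof of Lemma 2: let V be a symmetric positive definite n×n matrix, G a symmetric positive semidefinite n×n matrix, and μ > 0. Then for every x ∈ ℝⁿ and every c ∈ ℝⁿ, (Gc)ᵀV(Gc) + μ cᵀGc + 2 cᵀGVx + xᵀVx ≥ xᵀ (V⁻¹ + μ⁻¹ G)⁻¹ x, with equality attained at c = -(G + μ V⁻¹)⁻¹ x. -/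
/-!
With `A = G + μ V⁻¹` and `M = G V G + μ G = G V A`, the left-hand side equals
`(c + A⁻¹x)ᵀ M (c + A⁻¹x) + xᵀ (μ A⁻¹) x`, and `μ A⁻¹ = (V⁻¹ + μ⁻¹ G)⁻¹`.
Since `M = Gᵀ V G + μ G` is positive semidefinite the square term is nonnegative,
and it vanishes at `c = -A⁻¹x`.
-/

open Matrix

section CommRing

variable {ι R : Type*} [Fintype ι] [CommRing R]

theorem Matrix.IsSymm.dotProduct_mulVec_comm {S : Matrix ι ι R} (hS : S.IsSymm) (v w : ι → R) :
    v ⬝ᵥ S *ᵥ w = S *ᵥ v ⬝ᵥ w := by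
  rw [← hS.eq, dotProduct_transpose_mulVec, dotProduct_comm, hS.eq]

theorem Matrix.IsSymm.dotProduct_mulVec_add_two_mul_dotProduct {M : Matrix ι ι R}
    (hM : M.IsSymm) {a b : ι → R} (hab : M *ᵥ a = b) (c : ι → R) :
    c ⬝ᵥ M *ᵥ c + 2 * (c ⬝ᵥ b) = (c + a) ⬝ᵥ M *ᵥ (c + a) - a ⬝ᵥ b := by
  have hcross : a ⬝ᵥ M *ᵥ c = c ⬝ᵥ b := by rw [hM.dotProduct_mulVec_comm, hab, dotProduct_comm]
  rw [mulVec_add, dotProduct_add, add_dotProduct, add_dotProduct, hab, hcross]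
  ring

theorem Matrix.IsSymm.dotProduct_mul_mul_add_smul_mulVec {G : Matrix ι ι R} (hG : G.IsSymm)
    (V : Matrix ι ι R) (μ : R) (c : ι → R) :
    c ⬝ᵥ (G * V * G + μ • G) *ᵥ c = G *ᵥ c ⬝ᵥ V *ᵥ G *ᵥ c + μ * (c ⬝ᵥ G *ᵥ c) := by
  rw [add_mulVec, dotProduct_add, smul_mulVec, dotProduct_smul, smul_eq_mul, ← mulVec_mulVec,
    ← mulVec_mulVec, hG.dotProduct_mulVec_comm]

theorem Matrix.IsSymm.mul_mul_add_smul {G V : Matrix ι ι R} (hG : G.IsSymm) (hV : V.IsSymm)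
    (μ : R) : (G * V * G + μ • G).IsSymm := by
  simp only [IsSymm, transpose_add, transpose_smul, transpose_mul, hG.eq, hV.eq, mul_assoc]

end CommRing

section Field

variable {ι K : Type*} [Fintype ι] [DecidableEq ι] [Field K] {V G : Matrix ι ι K} {μ : K}

theorem inv_add_inv_smul_eq_smul_inv (hA : IsUnit (G + μ • V⁻¹).det) (hμ : μ ≠ 0) :
    (V⁻¹ + μ⁻¹ • G)⁻¹ = μ • (G + μ • V⁻¹)⁻¹ := by
  have hfactor : V⁻¹ + μ⁻¹ • G = μ⁻¹ • (G + μ • V⁻¹) := by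
    rw [smul_add, smul_smul, inv_mul_cancel₀ hμ, one_smul, add_comm]
  rw [hfactor]
  refine inv_eq_left_inv ?_
  rw [smul_mul_smul_comm, mul_inv_cancel₀ hμ, one_smul, nonsing_inv_mul _ hA]

theorem mul_mul_add_smul_mulVec_inv_add_smul_inv (hV : IsUnit V.det)
    (hA : IsUnit (G + μ • V⁻¹).det) (x : ι → K) :
    (G * V * G + μ • G) *ᵥ (G + μ • V⁻¹)⁻¹ *ᵥ x = (G * V) *ᵥ x := by
  have hfactor : G * V * G + μ • G = G * V * (G + μ • V⁻¹) := by
    rw [mul_add, Matrix.mul_smul, mul_assoc G V V⁻¹, mul_nonsing_inv V hV, mul_one]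
  rw [hfactor, mulVec_mulVec, mul_assoc, mul_nonsing_inv _ hA, mul_one]

theorem dotProduct_mulVec_sub_inv_add_smul_inv (hV : IsUnit V.det)
    (hA : (G + μ • V⁻¹).IsSymm) (hAdet : IsUnit (G + μ • V⁻¹).det) (x : ι → K) :
    x ⬝ᵥ V *ᵥ x - (G + μ • V⁻¹)⁻¹ *ᵥ x ⬝ᵥ (G * V) *ᵥ x
      = x ⬝ᵥ (μ • (G + μ • V⁻¹)⁻¹) *ᵥ x := by
  set A := G + μ • V⁻¹ with hA_def
  have hGV : G * V = A * V - μ • 1 := by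
    rw [hA_def, add_mul, Matrix.smul_mul, nonsing_inv_mul _ hV, add_sub_cancel_right]
  have hAx : A *ᵥ A⁻¹ *ᵥ x = x := by rw [mulVec_mulVec, mul_nonsing_inv _ hAdet, one_mulVec]
  rw [hGV, sub_mulVec, ← mulVec_mulVec, dotProduct_sub, hA.dotProduct_mulVec_comm, hAx,
    smul_mulVec, one_mulVec, smul_mulVec, dotProduct_smul, dotProduct_smul,
    dotProduct_comm (A⁻¹ *ᵥ x)]
  ring

theorem dotProduct_mulVec_add_eq_completed_square (hG : G.IsSymm) (hV : V.IsSymm)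
    (hVdet : IsUnit V.det) (hAdet : IsUnit (G + μ • V⁻¹).det) (hμ : μ ≠ 0) (x c : ι → K) :
    G *ᵥ c ⬝ᵥ V *ᵥ G *ᵥ c + μ * (c ⬝ᵥ G *ᵥ c) + 2 * (c ⬝ᵥ (G * V) *ᵥ x) + x ⬝ᵥ V *ᵥ x
      = (c + (G + μ • V⁻¹)⁻¹ *ᵥ x) ⬝ᵥ (G * V * G + μ • G) *ᵥ (c + (G + μ • V⁻¹)⁻¹ *ᵥ x)
        + x ⬝ᵥ (V⁻¹ + μ⁻¹ • G)⁻¹ *ᵥ x := by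
  rw [← hG.dotProduct_mul_mul_add_smul_mulVec,
    (hG.mul_mul_add_smul hV μ).dotProduct_mulVec_add_two_mul_dotProduct
      (mul_mul_add_smul_mulVec_inv_add_smul_inv hVdet hAdet x),
    inv_add_inv_smul_eq_smul_inv hAdet hμ,
    ← dotProduct_mulVec_sub_inv_add_smul_inv hVdet (hG.add (hV.inv.smul μ)) hAdet]
  ring

end Field

/-- Quadratic minimization inequality used in the proof of Lemma 2: for symmetric positive
definite `V`, positive semidefinite `G` and `μ > 0`,
`(Gc)ᵀV(Gc) + μ cᵀGc + 2cᵀGVx + xᵀVx ≥ xᵀ(V⁻¹ + μ⁻¹G)⁻¹x`, with equality at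
`c = -(G + μV⁻¹)⁻¹x`. -/
theorem quadratic_minimization_inequality
    {n : ℕ} (V G : Matrix (Fin n) (Fin n) ℝ)
    (hV : V.PosDef) (hG : G.PosSemidef) (μ : ℝ) (hμ : 0 < μ) :
    (∀ (x c : Fin n → ℝ),
      (G.mulVec c) ⬝ᵥ V.mulVec (G.mulVec c) + μ * (c ⬝ᵥ G.mulVec c)
          + 2 * (c ⬝ᵥ (G * V).mulVec x) + x ⬝ᵥ V.mulVec x
        ≥ x ⬝ᵥ ((V⁻¹ + μ⁻¹ • G)⁻¹).mulVec x) ∧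
    (∀ x : Fin n → ℝ, ∀ c : Fin n → ℝ, c = -((G + μ • V⁻¹)⁻¹).mulVec x →
      (G.mulVec c) ⬝ᵥ V.mulVec (G.mulVec c) + μ * (c ⬝ᵥ G.mulVec c)
          + 2 * (c ⬝ᵥ (G * V).mulVec x) + x ⬝ᵥ V.mulVec x
        = x ⬝ᵥ ((V⁻¹ + μ⁻¹ • G)⁻¹).mulVec x) := by
  have hGsymm : G.IsSymm := hG.isHermitian
  have hA : (G + μ • V⁻¹).PosDef := PosDef.posSemidef_add hG (hV.inv.smul hμ)
  have hM : (G * V * G + μ • G).PosSemidef := by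
    simpa [hGsymm.eq] using (hV.posSemidef.conjTranspose_mul_mul_same G).add (hG.smul hμ.le)
  have key := dotProduct_mulVec_add_eq_completed_square (V := V) hGsymm hV.isHermitian
    ((isUnit_iff_isUnit_det V).mp hV.isUnit) ((isUnit_iff_isUnit_det _).mp hA.isUnit) hμ.ne'
  refine ⟨fun x c => ?_, fun x c hc => ?_⟩
  · rw [ge_iff_le, key]
    exact le_add_of_nonneg_left (hM.dotProduct_mulVec_nonneg _)
  · rw [key, hc, neg_add_cancel, zero_dotProduct, zero_add]
end
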